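/- arXiv:2405.10178 — 2 statements merged into one kernel-verified Lean document; each statement's English description precedes it below -/
import Mathlib

section
/- For a > 0, b < 1 with a - b + 1 > 0, the function U(a,b,x) = (1/Γ(a)) ∫_0^∞ e^{-xt} t^{a-1}(1+t)^{b-a-1} dt tends to Γ(1-b)/Γ(a-b+1) as x → 0⁺. -/
open MeasureTheory Filter Topology

/-- Tricomi's confluent hypergeometric function of the second kind, defined for `a > 0`
and `x > 0` by its Laplace transform integral representation. -/
noncomputable def tricomiU (a b x : ℝ) : ℝ :=
  (1 / Real.Gamma a) * ∫ t in Set.Ioi (0 : ℝ), Real.exp (-x * t) * t ^ (a - 1) * (1 + t) ^ (b - a - 1)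

/-! The substitution `u = t / (1 + t)` maps `(0, ∞)` onto `(0, 1)` and turns
`t ^ (a - 1) * (1 + t) ^ (-(a + c))` into the Beta integrand `u ^ (a - 1) * (1 - u) ^ (c - 1)`,
so for `c = 1 - b` the integral at `x = 0` equals `B(a, 1 - b) = Γ(a) Γ(1 - b) / Γ(a - b + 1)`.
Since `0 ≤ exp (-x * t) ≤ 1` for `x, t ≥ 0`, dominated convergence gives the limit as
`x → 0⁺`. -/

open Set Real

lemma ofReal_cpow_mul_one_sub_cpow {s t u : ℝ} (hu : u ∈ Ioo (0 : ℝ) 1) :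
    (u : ℂ) ^ ((s : ℂ) - 1) * (1 - (u : ℂ)) ^ ((t : ℂ) - 1)
      = ((u ^ (s - 1) * (1 - u) ^ (t - 1) : ℝ) : ℂ) := by
  rw [Complex.ofReal_mul, Complex.ofReal_cpow hu.1.le, Complex.ofReal_cpow (sub_pos.2 hu.2).le]
  push_cast
  rfl

lemma Complex.betaIntegral_ofReal (s t : ℝ) :
    Complex.betaIntegral s t
      = ((∫ u in Ioo (0 : ℝ) 1, u ^ (s - 1) * (1 - u) ^ (t - 1) : ℝ) : ℂ) := by
  rw [Complex.betaIntegral, intervalIntegral.integral_of_le zero_le_one,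
    integral_Ioc_eq_integral_Ioo, ← integral_complex_ofReal]
  exact setIntegral_congr_fun measurableSet_Ioo fun u hu => ofReal_cpow_mul_one_sub_cpow hu

lemma integrableOn_rpow_mul_one_sub_rpow {s t : ℝ} (hs : 0 < s) (ht : 0 < t) :
    IntegrableOn (fun u : ℝ => u ^ (s - 1) * (1 - u) ^ (t - 1)) (Ioo 0 1) := by
  have hC := (Complex.betaIntegral_convergent (u := s) (v := t) (by simpa) (by simpa)).1
  refine IntegrableOn.congr_fun (hC.mono_set Ioo_subset_Ioc_self).re (fun u hu => ?_)
    measurableSet_Ioo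
  simp only [RCLike.re_to_complex, ofReal_cpow_mul_one_sub_cpow hu, Complex.ofReal_re]

lemma integral_rpow_mul_one_sub_rpow {s t : ℝ} (hs : 0 < s) (ht : 0 < t) :
    ∫ u in Ioo (0 : ℝ) 1, u ^ (s - 1) * (1 - u) ^ (t - 1) = ProbabilityTheory.beta s t := by
  rw [ProbabilityTheory.beta_eq_betaIntegralReal s t hs ht, Complex.betaIntegral_ofReal,
    Complex.ofReal_re]

lemma hasDerivAt_div_one_add {t : ℝ} (ht : 1 + t ≠ 0) :
    HasDerivAt (fun t : ℝ => t / (1 + t)) (1 / (1 + t) ^ 2) t := by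
  simpa using (hasDerivAt_id' t).fun_div ((hasDerivAt_id' t).const_add 1) ht

lemma injOn_div_one_add : InjOn (fun t : ℝ => t / (1 + t)) (Ioi 0) := by
  intro s (hs : 0 < s) t (ht : 0 < t) h
  rw [div_eq_div_iff (by positivity) (by positivity)] at h
  linarith

lemma image_div_one_add_Ioi : (fun t : ℝ => t / (1 + t)) '' Ioi 0 = Ioo 0 1 := by
  ext u
  constructor
  · rintro ⟨t, ht : 0 < t, rfl⟩
    exact ⟨by positivity, (div_lt_one (by positivity)).2 (by linarith)⟩
  · rintro ⟨hu₀, hu₁⟩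
    have hu : 0 < 1 - u := sub_pos.2 hu₁
    refine ⟨u / (1 - u), div_pos hu₀ hu, ?_⟩
    field_simp
    ring

lemma abs_deriv_smul_comp_div_one_add {a c t : ℝ} (ht : 0 < t) :
    |1 / (1 + t) ^ 2| • ((t / (1 + t)) ^ (a - 1) * (1 - t / (1 + t)) ^ (c - 1))
      = t ^ (a - 1) * (1 + t) ^ (-(a + c)) := by
  have hp : 0 < 1 + t := by linarith
  have hsub : 1 - t / (1 + t) = (1 + t)⁻¹ := by field_simp; ring
  have hsq : 1 / (1 + t) ^ 2 = (1 + t) ^ (-2 : ℝ) := by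
    rw [rpow_neg hp.le, one_div, ← rpow_natCast]; norm_num
  rw [hsub, hsq, abs_of_pos (by positivity), smul_eq_mul, div_rpow ht.le hp.le,
    inv_rpow hp.le, ← rpow_neg hp.le, div_eq_mul_inv, ← rpow_neg hp.le,
    show -(a + c) = -2 + -(a - 1) + -(c - 1) by ring, rpow_add hp, rpow_add hp]
  ring

lemma integrableOn_Ioi_rpow_mul_one_add_rpow_neg {a c : ℝ} (ha : 0 < a) (hc : 0 < c) :
    IntegrableOn (fun t : ℝ => t ^ (a - 1) * (1 + t) ^ (-(a + c))) (Ioi 0) := by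
  have h := integrableOn_image_iff_integrableOn_abs_deriv_smul measurableSet_Ioi
    (fun t ht => (hasDerivAt_div_one_add (by linarith [mem_Ioi.1 ht])).hasDerivWithinAt)
    injOn_div_one_add (fun u : ℝ => u ^ (a - 1) * (1 - u) ^ (c - 1))
  rw [image_div_one_add_Ioi] at h
  exact (h.1 (integrableOn_rpow_mul_one_sub_rpow ha hc)).congr_fun
    (fun t ht => abs_deriv_smul_comp_div_one_add ht) measurableSet_Ioi

lemma integral_Ioi_rpow_mul_one_add_rpow_neg {a c : ℝ} (ha : 0 < a) (hc : 0 < c) :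
    ∫ t in Ioi (0 : ℝ), t ^ (a - 1) * (1 + t) ^ (-(a + c)) = ProbabilityTheory.beta a c := by
  have h := integral_image_eq_integral_abs_deriv_smul measurableSet_Ioi
    (fun t ht => (hasDerivAt_div_one_add (by linarith [mem_Ioi.1 ht])).hasDerivWithinAt)
    injOn_div_one_add (fun u : ℝ => u ^ (a - 1) * (1 - u) ^ (c - 1))
  rw [image_div_one_add_Ioi, integral_rpow_mul_one_sub_rpow ha hc,
    setIntegral_congr_fun measurableSet_Ioi fun t ht => abs_deriv_smul_comp_div_one_add ht] at h
  exact h.symm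

lemma tendsto_laplace_integral_nhdsGE_zero {E : Type*} [NormedAddCommGroup E] [NormedSpace ℝ E]
    {f : ℝ → E} (hf : IntegrableOn f (Ioi 0)) :
    Tendsto (fun x : ℝ => ∫ t in Ioi (0 : ℝ), exp (-x * t) • f t) (𝓝[≥] 0)
      (𝓝 (∫ t in Ioi (0 : ℝ), f t)) := by
  refine tendsto_integral_filter_of_dominated_convergence (fun t => ‖f t‖) ?_ ?_ hf.norm ?_
  · exact Eventually.of_forall fun x =>
      ((by fun_prop : Continuous fun t : ℝ => exp (-x * t)).aestronglyMeasurable).smul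
        hf.aestronglyMeasurable
  · filter_upwards [self_mem_nhdsWithin] with x (hx : 0 ≤ x)
    filter_upwards [ae_restrict_mem measurableSet_Ioi] with t (ht : 0 < t)
    rw [norm_smul, norm_of_nonneg (exp_pos _).le]
    exact mul_le_of_le_one_left (norm_nonneg _) (exp_le_one_iff.2 (by nlinarith))
  · refine Eventually.of_forall fun t => ?_
    have h : Tendsto (fun x : ℝ => exp (-x * t)) (𝓝[≥] 0) (𝓝 1) := by
      simpa using ((by fun_prop : Continuous fun x : ℝ => exp (-x * t)).tendsto 0).mono_left
        nhdsWithin_le_nhds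
    simpa using h.smul_const (f t)

theorem tricomiU_limit_zero_general (a b : ℝ) (ha : 0 < a) (hb : b < 1) :
    Tendsto (fun x : ℝ => tricomiU a b x) (𝓝[>] 0)
      (𝓝 (Real.Gamma (1 - b) / Real.Gamma (a - b + 1))) := by
  have hc : 0 < 1 - b := sub_pos.2 hb
  have hexp : b - a - 1 = -(a + (1 - b)) := by ring
  have hlim := (tendsto_laplace_integral_nhdsGE_zero
    (integrableOn_Ioi_rpow_mul_one_add_rpow_neg ha hc)).mono_left
    (nhdsWithin_mono 0 Ioi_subset_Ici_self)
  rw [integral_Ioi_rpow_mul_one_add_rpow_neg ha hc] at hlim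
  convert hlim.const_mul (1 / Gamma a) using 2 with x
  · simp only [tricomiU, hexp, smul_eq_mul, mul_assoc]
  · rw [ProbabilityTheory.beta, show a + (1 - b) = a - b + 1 by ring]
    field_simp [(Gamma_pos_of_pos ha).ne']

theorem tricomiU_limit_zero (a b : ℝ) (ha : 0 < a) (hb : b < 1) (hab : 0 < a - b + 1) :
    Tendsto (fun x : ℝ => tricomiU a b x) (𝓝[>] 0)
      (𝓝 (Real.Gamma (1 - b) / Real.Gamma (a - b + 1))) :=
  tricomiU_limit_zero_general a b ha hb
end

section
/- Let Z = XY where (X,Y) is bivariate normal with means (μ_X, μ_Y), unit variances, and correlation ρ ∈ (-1,1). Then the characteristic function of Z is φ_Z(t) = ([1-(1+ρ)it][1+(1-ρ)it])^{-1/2} · exp( (-(μ_X²+μ_Y²-2ρμ_Xμ_Y)t² + 2μ_Xμ_Y it) / (2[1-(1+ρ)it][1+(1-ρ)it]) ) for all real t, where the square root is the principal branch. -/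
/-!
Conditionally on `ξ`, the phase `t X Y` is affine in the independent Gaussian `η`, so integrating
out `η` with the Gaussian moment generating function leaves `exp (a ξ² + b ξ + c)`. Completing the
square against the standard normal density gives `(1 - 2a)^{-1/2} exp (c + b² / (2 (1 - 2a)))`,
and `1 - 2a = [1 - (1 + ρ) i t] [1 + (1 - ρ) i t]`.
-/

open MeasureTheory ProbabilityTheory Complex Real
open scoped NNReal

lemma Complex.ofReal_div_cpow_of_re_pos {r : ℝ} (hr : 0 < r) {w : ℂ} (hw : 0 < w.re) (s : ℂ) :
    ((r : ℂ) / w) ^ s = (r : ℂ) ^ s * (w ^ s)⁻¹ := by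
  have hr' : (r : ℂ) ≠ 0 := ofReal_ne_zero.2 hr.ne'
  have hw' : w⁻¹ ≠ 0 := inv_ne_zero fun h ↦ by simp [h] at hw
  rw [div_eq_mul_inv, cpow_def_of_ne_zero (mul_ne_zero hr' hw'), log_ofReal_mul hr hw',
    ofReal_log hr.le, add_mul, exp_add, ← cpow_def_of_ne_zero hr', ← cpow_def_of_ne_zero hw',
    inv_cpow _ _ fun h ↦ (arg_eq_pi_iff.1 h).1.not_gt hw]

theorem integral_cexp_quadratic_gaussianReal {v : ℝ≥0} (hv : v ≠ 0) {a : ℂ}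
    (ha : (2 * v * a).re < 1) (b c : ℂ) :
    ∫ x, cexp (a * x ^ 2 + b * x + c) ∂gaussianReal 0 v
      = (1 - 2 * v * a) ^ (-(1 : ℂ) / 2) * cexp (c + v * b ^ 2 / (2 * (1 - 2 * v * a))) := by
  have hv' : (v : ℂ) ≠ 0 := by exact_mod_cast hv
  have hP : 0 < (1 - 2 * v * a).re := by simpa using ha
  have h2πv : (0 : ℝ) < 2 * π * v := by positivity
  calc ∫ x, cexp (a * x ^ 2 + b * x + c) ∂gaussianReal 0 v
    _ = (√(2 * π * v))⁻¹ * ∫ x : ℝ, cexp (-(1 - 2 * v * a) / (2 * v) * x ^ 2 + b * x + c) := by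
      simp_rw [integral_gaussianReal_eq_integral_smul hv, Complex.real_smul, gaussianPDFReal,
        ← integral_const_mul]
      push_cast
      congr with x
      rw [mul_assoc, ← Complex.exp_add]
      congr 2
      field_simp
      ring
    _ = (√(2 * π * v))⁻¹ * ((2 * π * v : ℝ) / (1 - 2 * v * a)) ^ (1 / 2 : ℂ)
          * cexp (c + v * b ^ 2 / (2 * (1 - 2 * v * a))) := by
      have hre : (-(1 - 2 * v * a) / (2 * v)).re < 0 := by
        rw [neg_div, neg_re, neg_lt_zero, show (2 * (v : ℂ)) = ((2 * v : ℝ) : ℂ) by push_cast; rfl,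
          div_ofReal_re]
        exact div_pos (by simpa using hP) (by positivity)
      rw [integral_cexp_quadratic hre, ← mul_assoc]
      congr 3
      · push_cast
        field_simp
      · field_simp
        ring
    _ = _ := by
      rw [ofReal_div_cpow_of_re_pos h2πv hP, ← mul_assoc, sqrt_eq_rpow, ofReal_inv,
        ofReal_cpow h2πv.le]
      push_cast
      rw [inv_mul_cancel₀ (by simp [cpow_eq_zero_iff, hv', pi_ne_zero]), one_mul, ← cpow_neg]
      congr 2
      ring

lemma integrable_cexp_I_mul_ofReal {α : Type*} [MeasurableSpace α] {μ : Measure α}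
    [IsFiniteMeasure μ] {f : α → ℝ} (hf : AEMeasurable f μ) (t : ℝ) :
    Integrable (fun x ↦ cexp (I * t * f x)) μ :=
  (integrable_const 1).mono' (by fun_prop) (ae_of_all _ fun x ↦ by
    rw [norm_exp]; simp)

lemma integral_cexp_add_mul_gaussianReal (v : ℝ≥0) (w z : ℂ) :
    ∫ x, cexp (w + z * x) ∂gaussianReal 0 v = cexp (w + v * z ^ 2 / 2) := by
  simp_rw [Complex.exp_add, integral_const_mul]
  congr 1
  simpa [complexMGF] using complexMGF_id_gaussianReal (μ := 0) (v := v) z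

lemma integral_cexp_I_mul_affine_gaussianReal (v : ℝ≥0) (t x y s : ℝ) :
    ∫ η, cexp (I * t * ((x * (y + s * η) : ℝ) : ℂ)) ∂gaussianReal 0 v
      = cexp (I * t * x * y - v * s ^ 2 * t ^ 2 * x ^ 2 / 2) := by
  simp_rw [show ∀ η : ℝ, I * t * ((x * (y + s * η) : ℝ) : ℂ) = I * t * x * y + I * t * x * s * η
    by intro η; push_cast; ring, integral_cexp_add_mul_gaussianReal]
  congr 1
  linear_combination v * s ^ 2 * t ^ 2 * x ^ 2 / 2 * I_sq

theorem charFun_product_bivariate_normal (μX μY ρ : ℝ) (hρ : ρ ∈ Set.Ioo (-1 : ℝ) 1)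
    (t : ℝ) :
    (∫ p : ℝ × ℝ, Complex.exp (I * t *
        (((μX + p.1) * (μY + ρ * p.1 + Real.sqrt (1 - ρ ^ 2) * p.2) : ℝ) : ℂ))
      ∂((gaussianReal 0 1).prod (gaussianReal 0 1)))
    = ((1 - (1 + (ρ : ℂ)) * I * t) * (1 + (1 - (ρ : ℂ)) * I * t)) ^ (-(1 : ℂ) / 2) *
      Complex.exp ((-((μX ^ 2 + μY ^ 2 - 2 * ρ * μX * μY : ℝ) : ℂ) * t ^ 2
          + 2 * (μX : ℂ) * μY * I * t) /
        (2 * ((1 - (1 + (ρ : ℂ)) * I * t) * (1 + (1 - (ρ : ℂ)) * I * t)))) := by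
  have hρ' : 0 < 1 - ρ ^ 2 := by nlinarith [hρ.1, hρ.2]
  have hs : ((√(1 - ρ ^ 2) : ℝ) : ℂ) ^ 2 = 1 - ρ ^ 2 := by exact_mod_cast sq_sqrt hρ'.le
  have hre : (2 * ((1 : ℝ≥0) : ℂ) * (I * ρ * t - (1 - ρ ^ 2) * t ^ 2 / 2)).re < 1 := by
    have := mul_nonneg hρ'.le (sq_nonneg t)
    simpa [← ofReal_pow] using (by linarith : -(2 * ((1 - ρ ^ 2) * t ^ 2 / 2)) < 1)
  have hP : 1 - 2 * ((1 : ℝ≥0) : ℂ) * (I * ρ * t - (1 - ρ ^ 2) * t ^ 2 / 2)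
      = (1 - (1 + (ρ : ℂ)) * I * t) * (1 + (1 - (ρ : ℂ)) * I * t) := by
    push_cast
    linear_combination (1 - ρ ^ 2) * t ^ 2 * I_sq
  have hP0 : 2 * (1 - 2 * ((1 : ℝ≥0) : ℂ) * (I * ρ * t - (1 - ρ ^ 2) * t ^ 2 / 2)) ≠ 0 :=
    mul_ne_zero two_ne_zero (sub_ne_zero.2 fun h ↦ by rw [← h, one_re] at hre; exact hre.false)
  rw [integral_prod _ (integrable_cexp_I_mul_ofReal (by fun_prop) t)]
  simp_rw [integral_cexp_I_mul_affine_gaussianReal, hs, show ∀ ξ : ℝ,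
      I * t * ((μX + ξ : ℝ) : ℂ) * ((μY + ρ * ξ : ℝ) : ℂ)
        - ((1 : ℝ≥0) : ℂ) * (1 - ρ ^ 2) * t ^ 2 * ((μX + ξ : ℝ) : ℂ) ^ 2 / 2
      = (I * ρ * t - (1 - ρ ^ 2) * t ^ 2 / 2) * ξ ^ 2
        + (I * t * (μY + ρ * μX) - (1 - ρ ^ 2) * t ^ 2 * μX) * ξ
        + (I * t * μX * μY - (1 - ρ ^ 2) * t ^ 2 * μX ^ 2 / 2)
    by intro ξ; push_cast; ring]
  rw [integral_cexp_quadratic_gaussianReal one_ne_zero hre, ← hP]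
  congr 2
  rw [eq_div_iff hP0, add_mul, div_mul_cancel₀ _ hP0]
  push_cast
  linear_combination t ^ 2 * ((μY + ρ * μX) ^ 2 - 4 * ρ * μX * μY) * I_sq
end
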